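/- arXiv:2105.11417 — 6 statements merged into one kernel-verified Lean document; each statement's English description precedes it below -/
import Mathlib

section
/- Let n, p, q be natural numbers, m a positive natural number, and let L be a real 2D convolution filter L ∈ ℝ^{m×m×(2p+1)×(2q+1)}. Let J(L) denote the Jacobian of the convolution with filter L on m-channel n×n inputs (defined explicitly in the context), and let conv_transpose(L) be the filter with [conv_transpose(L)]_{a,b,k,l} = L_{b,a,2p-k,2q-l}. Then J(conv_transpose(L)) = (J(L))ᵀ. -/
/-! Reversing the kernel indices `k ↦ 2p - k` negates the shift `k - p`, and
`P^(-k) = (P^(k))ᵀ`; reindexing the defining sums by this reversal turns each block of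
`J(conv_transpose L)` into the transposed block of `J(L)`. -/

open Matrix

open scoped Kronecker

/-- The shift matrix `P^(k)`: the `n × n` matrix with `P^(k)_{i,j} = 1` if `i - j = k`
(as integers) and `0` otherwise. -/
def shiftP (n : ℕ) (k : ℤ) : Matrix (Fin n) (Fin n) ℝ :=
  Matrix.of fun i j => if ((i : ℕ) : ℤ) - ((j : ℕ) : ℤ) = k then 1 else 0

/-- The Jacobian of the 2D convolution (zero padding, stride 1) with a real filter
`L ∈ ℝ^{m×m×(2p+1)×(2q+1)}` on `m`-channel `n×n` inputs: the block matrix whose `(a,b)` block is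
`Σ_{i=-p}^{p} Σ_{j=-q}^{q} L_{a,b,p+i,q+j} • (P^(i) ⊗ P^(j))`. -/
def convJacobian (n p q m : ℕ)
    (L : Fin m → Fin m → Fin (2 * p + 1) → Fin (2 * q + 1) → ℝ) :
    Matrix (Fin m × Fin n × Fin n) (Fin m × Fin n × Fin n) ℝ :=
  Matrix.of fun x y =>
    ∑ k : Fin (2 * p + 1), ∑ l : Fin (2 * q + 1),
      L x.1 y.1 k l *
        (shiftP n (((k : ℕ) : ℤ) - (p : ℤ)) ⊗ₖ shiftP n (((l : ℕ) : ℤ) - (q : ℤ))) x.2 y.2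

theorem shiftP_transpose (n : ℕ) (k : ℤ) : (shiftP n k)ᵀ = shiftP n (-k) := by
  ext i j
  simp only [shiftP, transpose_apply, of_apply]
  congr 1
  exact propext (by omega)

theorem kronecker_shiftP_transpose (n : ℕ) (k l : ℤ) :
    (shiftP n k ⊗ₖ shiftP n l)ᵀ = shiftP n (-k) ⊗ₖ shiftP n (-l) := by
  rw [← kroneckerMap_transpose, shiftP_transpose, shiftP_transpose]

theorem Fin.val_rev_sub_center {p : ℕ} (k : Fin (2 * p + 1)) :
    ((k.rev : ℕ) : ℤ) - p = -(((k : ℕ) : ℤ) - p) := by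
  rw [Fin.val_rev]
  omega

theorem convJacobian_conv_transpose_general (n p q m : ℕ)
    (L : Fin m → Fin m → Fin (2 * p + 1) → Fin (2 * q + 1) → ℝ) :
    convJacobian n p q m (fun a b k l => L b a k.rev l.rev) = (convJacobian n p q m L)ᵀ := by
  ext x y
  simp only [convJacobian, transpose_apply, of_apply]
  rw [← Equiv.sum_comp Fin.revPerm]
  refine Finset.sum_congr rfl fun k _ => ?_
  rw [← Equiv.sum_comp Fin.revPerm]
  refine Finset.sum_congr rfl fun l _ => ?_
  simp only [Fin.revPerm_apply, Fin.rev_rev, Fin.val_rev_sub_center,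
    ← kronecker_shiftP_transpose, transpose_apply]

/-- For a real filter `L`, the Jacobian of the convolution with
`conv_transpose(L)_{a,b,k,l} = L_{b,a,2p-k,2q-l}` equals the transpose of the Jacobian of the
convolution with `L`. -/
theorem convJacobian_conv_transpose (n p q m : ℕ) (hm : 0 < m)
    (L : Fin m → Fin m → Fin (2 * p + 1) → Fin (2 * q + 1) → ℝ) :
    convJacobian n p q m (fun a b k l => L b a k.rev l.rev) = (convJacobian n p q m L)ᵀ :=
  convJacobian_conv_transpose_general n p q m L
end

section
/- Let n, p, q be natural numbers, m a positive natural number, and let L ∈ ℝ^{m×m×(2p+1)×(2q+1)} be a real 2D convolution filter, with Jacobian J(L) on m-channel n×n inputs (defined explicitly in the context). Assume n ≥ 2p+1 and n ≥ 2q+1. Then J(L) is skew-symmetric (J(L)ᵀ = -J(L)) if and only if there exists a filter M ∈ ℝ^{m×m×(2p+1)×(2q+1)} such that L = M - conv_transpose(M), where [conv_transpose(M)]_{a,b,k,l} = M_{b,a,2p-k,2q-l}. -/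
open Matrix

open scoped Kronecker

/-! Transposing `J(L)` replaces every shift `P^(i) ⊗ P^(j)` by `P^(-i) ⊗ P^(-j)`, and reversing the
filter indices undoes this, so `J(L)ᵀ = J(conv_transpose L)`. Once `n ≥ 2p+1` and `n ≥ 2q+1` the
map `L ↦ J(L)` is injective, because `L_{a,b,k,l}` is the entry of `J(L)` in row `(a,k,l)` and
column `(b,p,q)`. So `J(L)` is skew-symmetric iff `conv_transpose L = -L`, and for the linear
involution `conv_transpose` this means `L = M - conv_transpose M` (take `M = L/2`). -/

theorem Function.Involutive.apply_eq_neg_iff_exists_sub {R V : Type*} [DivisionRing R]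
    [NeZero (2 : R)] [AddCommGroup V] [Module R V] {τ : V →ₗ[R] V} (hτ : Function.Involutive τ)
    (x : V) : τ x = -x ↔ ∃ y, x = y - τ y := by
  constructor
  · intro hx
    refine ⟨(2 : R)⁻¹ • x, ?_⟩
    rw [map_smul, hx, smul_neg, sub_neg_eq_add, ← add_smul, ← two_mul, mul_inv_cancel₀ two_ne_zero,
      one_smul]
  · rintro ⟨y, rfl⟩
    rw [map_sub, hτ y, neg_sub]

abbrev ConvFilter (m p q : ℕ) := Fin m → Fin m → Fin (2 * p + 1) → Fin (2 * q + 1) → ℝ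

def convTranspose (m p q : ℕ) : ConvFilter m p q →ₗ[ℝ] ConvFilter m p q where
  toFun M a b k l := M b a k.rev l.rev
  map_add' _ _ := rfl
  map_smul' _ _ := rfl

theorem convTranspose_involutive (m p q : ℕ) : Function.Involutive (convTranspose m p q) :=
  fun M => by ext; simp [convTranspose]

section

variable {n p q m : ℕ}

theorem convJacobian_neg (L : ConvFilter m p q) :
    convJacobian n p q m (-L) = -convJacobian n p q m L := by
  ext x y
  simp [convJacobian, Finset.sum_neg_distrib]

theorem convJacobian_transpose (L : ConvFilter m p q) :
    (convJacobian n p q m L)ᵀ = convJacobian n p q m (convTranspose m p q L) := by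
  ext x y
  rw [transpose_apply, convJacobian, convJacobian, of_apply, of_apply,
    ← Equiv.sum_comp Fin.revPerm]
  refine Finset.sum_congr rfl fun k _ => ?_
  rw [← Equiv.sum_comp Fin.revPerm]
  refine Finset.sum_congr rfl fun l _ => ?_
  rw [← transpose_apply (_ ⊗ₖ _), ← kroneckerMap_transpose, shiftP_transpose, shiftP_transpose]
  simp only [Fin.revPerm_apply, Fin.val_rev_sub_center, neg_neg]
  rfl

theorem convJacobian_apply_center (hp : 2 * p + 1 ≤ n) (hq : 2 * q + 1 ≤ n)
    (L : ConvFilter m p q) (a b : Fin m) (k : Fin (2 * p + 1)) (l : Fin (2 * q + 1)) :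
    convJacobian n p q m L (a, Fin.castLE hp k, Fin.castLE hq l)
      (b, ⟨p, by omega⟩, ⟨q, by omega⟩) = L a b k l := by
  simp [convJacobian, shiftP, ← Fin.ext_iff]

theorem convJacobian_injective (hp : 2 * p + 1 ≤ n) (hq : 2 * q + 1 ≤ n) :
    Function.Injective (convJacobian n p q m) := fun L L' h => by
  ext a b k l
  rw [← convJacobian_apply_center hp hq L, h, convJacobian_apply_center]

end

theorem convJacobian_skew_iff_general (n p q m : ℕ)
    (hp : 2 * p + 1 ≤ n) (hq : 2 * q + 1 ≤ n)
    (L : Fin m → Fin m → Fin (2 * p + 1) → Fin (2 * q + 1) → ℝ) :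
    (convJacobian n p q m L)ᵀ = -(convJacobian n p q m L) ↔
      ∃ M : Fin m → Fin m → Fin (2 * p + 1) → Fin (2 * q + 1) → ℝ,
        L = fun a b k l => M a b k l - M b a k.rev l.rev := by
  rw [convJacobian_transpose, ← convJacobian_neg, (convJacobian_injective hp hq).eq_iff]
  exact (convTranspose_involutive m p q).apply_eq_neg_iff_exists_sub L

/-- If `n ≥ 2p+1` and `n ≥ 2q+1`, the Jacobian of the convolution with a real filter `L` is
skew-symmetric if and only if `L = M - conv_transpose(M)` for some filter `M`, where
`conv_transpose(M)_{a,b,k,l} = M_{b,a,2p-k,2q-l}`. -/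
theorem convJacobian_skew_iff (n p q m : ℕ) (hm : 0 < m)
    (hp : 2 * p + 1 ≤ n) (hq : 2 * q + 1 ≤ n)
    (L : Fin m → Fin m → Fin (2 * p + 1) → Fin (2 * q + 1) → ℝ) :
    (convJacobian n p q m L)ᵀ = -(convJacobian n p q m L) ↔
      ∃ M : Fin m → Fin m → Fin (2 * p + 1) → Fin (2 * q + 1) → ℝ,
        L = fun a b k l => M a b k l - M b a k.rev l.rev :=
  convJacobian_skew_iff_general n p q m hp hq L
end

section
/- Let J ∈ ℝ^{n×n} be a real skew-symmetric matrix (Jᵀ = -J) and let k be a natural number. Then ‖exp(J) - S_k(J)‖₂ ≤ ‖J‖₂^k / k!, where S_k(J) = Σ_{i=0}^{k-1} J^i / i! (with S_0(J) = 0). -/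
/-!
The remainder `R_k(t) = exp(tA) - S_k(tA)` satisfies `R_{k+1}' = A R_k` and `R_{k+1}(0) = 0`.
If `‖exp(tA)‖ ≤ 1` for `t ≥ 0`, then induction on `k` with the comparison principle for
derivatives gives `‖R_k(t)‖ ≤ (t‖A‖)^k / k!`. For skew-symmetric `J` every `tJ` is
skew-adjoint, so `exp(tJ)` is orthogonal and has spectral norm at most one.
-/

open Matrix NormedSpace Finset Nat

open scoped Matrix.Norms.L2Operator

section ExpPartialSum

variable {𝔸 : Type*} [NormedRing 𝔸] [NormedAlgebra ℝ 𝔸]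

noncomputable def expPartialSum (k : ℕ) (A : 𝔸) : 𝔸 :=
  ∑ i ∈ range k, ((i ! : ℝ))⁻¹ • A ^ i

@[simp]
theorem expPartialSum_zero (A : 𝔸) : expPartialSum 0 A = 0 := by
  simp [expPartialSum]

theorem expPartialSum_succ (k : ℕ) (A : 𝔸) :
    expPartialSum (k + 1) A = expPartialSum k A + ((k ! : ℝ))⁻¹ • A ^ k :=
  sum_range_succ _ _

@[simp]
theorem expPartialSum_succ_zero (k : ℕ) : expPartialSum (k + 1) (0 : 𝔸) = 1 := by
  simp [expPartialSum, sum_range_succ']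

theorem hasDerivAt_inv_factorial_smul_smul_pow (A : 𝔸) (k : ℕ) (t : ℝ) :
    HasDerivAt (fun s : ℝ => (((k + 1)! : ℝ))⁻¹ • (s • A) ^ (k + 1))
      (A * ((k ! : ℝ))⁻¹ • (t • A) ^ k) t := by
  simp only [smul_pow, smul_smul]
  refine (((hasDerivAt_pow (k + 1) t).const_mul (((k + 1)! : ℝ))⁻¹).smul_const
    (A ^ (k + 1))).congr_deriv ?_
  rw [mul_smul_comm, ← pow_succ' A k, factorial_succ, Nat.add_sub_cancel]
  push_cast
  congr 1
  field_simp

theorem hasDerivAt_expPartialSum_smul (A : 𝔸) (k : ℕ) (t : ℝ) :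
    HasDerivAt (fun s : ℝ => expPartialSum (k + 1) (s • A)) (A * expPartialSum k (t • A)) t := by
  induction k with
  | zero => simpa [expPartialSum] using hasDerivAt_const t (1 : 𝔸)
  | succ k ih =>
    rw [expPartialSum_succ, mul_add]
    exact (ih.add (hasDerivAt_inv_factorial_smul_smul_pow A k t)).congr_of_eventuallyEq
      (.of_forall fun s => expPartialSum_succ _ _)

variable [CompleteSpace 𝔸]

theorem hasDerivAt_exp_smul_sub_expPartialSum (A : 𝔸) (k : ℕ) (t : ℝ) :
    HasDerivAt (fun s : ℝ => exp (s • A) - expPartialSum (k + 1) (s • A))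
      (A * (exp (t • A) - expPartialSum k (t • A))) t := by
  rw [mul_sub]
  exact (hasDerivAt_exp_smul_const' A t).sub (hasDerivAt_expPartialSum_smul A k t)

theorem norm_exp_smul_sub_expPartialSum_le {A : 𝔸} (hA : ∀ t : ℝ, 0 ≤ t → ‖exp (t • A)‖ ≤ 1)
    (k : ℕ) {t : ℝ} (ht : 0 ≤ t) :
    ‖exp (t • A) - expPartialSum k (t • A)‖ ≤ (t * ‖A‖) ^ k / k ! := by
  induction k generalizing t with
  | zero => simpa using hA t ht
  | succ k ih =>
    have hB (s : ℝ) : HasDerivAt (fun s : ℝ => (s * ‖A‖) ^ (k + 1) / (k + 1)!)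
        (‖A‖ * ((s * ‖A‖) ^ k / k !)) s := by
      simpa only [smul_eq_mul, inv_mul_eq_div, mul_div_assoc']
        using hasDerivAt_inv_factorial_smul_smul_pow ‖A‖ k s
    refine image_norm_le_of_norm_deriv_right_le_deriv_boundary (a := 0)
      (fun s _ => (hasDerivAt_exp_smul_sub_expPartialSum A k s).continuousAt.continuousWithinAt)
      (fun s _ => (hasDerivAt_exp_smul_sub_expPartialSum A k s).hasDerivWithinAt)
      ?_ hB (fun s hs => ?_) ⟨ht, le_rfl⟩
    · simp
    · exact (norm_mul_le _ _).trans (mul_le_mul_of_nonneg_left (ih hs.1) (norm_nonneg A))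

end ExpPartialSum

theorem norm_le_one_of_mem_unitary {E : Type*} [NormedRing E] [StarRing E] [CStarRing E]
    {U : E} (hU : U ∈ unitary E) : ‖U‖ ≤ 1 := by
  rcases subsingleton_or_nontrivial E with _ | _
  · simp [Subsingleton.elim U 0]
  · exact (CStarRing.norm_of_mem_unitary hU).le

theorem norm_exp_le_one_of_mem_skewAdjoint {E : Type*} [NormedRing E] [StarRing E] [CStarRing E]
    [NormedAlgebra ℚ E] [CompleteSpace E] [ContinuousStar E] {A : E} (hA : A ∈ skewAdjoint E) :
    ‖exp A‖ ≤ 1 :=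
  norm_le_one_of_mem_unitary (exp_mem_unitary_of_mem_skewAdjoint hA)

/-- For a real skew-symmetric matrix `J` (`Jᵀ = -J`), the spectral norm of the difference between
the matrix exponential `exp(J)` and its `k`-term Taylor approximation
`S_k(J) = Σ_{i=0}^{k-1} J^i / i!` is at most `‖J‖₂^k / k!`. -/
theorem norm_exp_sub_taylor_le {n : ℕ} (J : Matrix (Fin n) (Fin n) ℝ)
    (hJ : Jᵀ = -J) (k : ℕ) :
    ‖NormedSpace.exp J - ∑ i ∈ Finset.range k, ((Nat.factorial i : ℝ))⁻¹ • J ^ i‖ ≤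
      ‖J‖ ^ k / (Nat.factorial k : ℝ) := by
  have hskew : J ∈ skewAdjoint (Matrix (Fin n) (Fin n) ℝ) := by
    rw [skewAdjoint.mem_iff, star_eq_conjTranspose, conjTranspose_eq_transpose_of_trivial, hJ]
  let _ : NormedAlgebra ℚ (Matrix (Fin n) (Fin n) ℝ) := .restrictScalars ℚ ℝ _
  have hcontr (t : ℝ) (_ : 0 ≤ t) : ‖exp (t • J)‖ ≤ 1 :=
    norm_exp_le_one_of_mem_skewAdjoint (skewAdjoint.smul_mem t hskew)
  simpa [expPartialSum] using norm_exp_smul_sub_expPartialSum_le hcontr k zero_le_one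
end

section
/- For every real skew-symmetric matrix A ∈ ℝ^{n×n} (Aᵀ = -A), there exists a real skew-symmetric matrix B ∈ ℝ^{n×n} such that exp(B) = exp(A) and ‖B‖₂ ≤ π. -/
open Matrix

open scoped Matrix.Norms.L2Operator

open Polynomial Real Complex

/-! A real skew-symmetric `A` is unitarily diagonalisable over `ℂ` as `U diag(i θⱼ) U*`. Replacing
each `θⱼ` by its representative `φⱼ` modulo `2π` in `[-π, π]` gives a skew-Hermitian matrix with the
same exponential and norm at most `π`. It is real because it equals `p(A)` for a real odd polynomial
`p` with `p(i θⱼ) = i φⱼ`, which exists once `φⱼ` is chosen so that `φⱼ / θⱼ` depends only on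
`θⱼ²`. -/

/-- `θ * reducedAngleRatio (θ ^ 2)` is a representative of `θ` modulo `2π` in `[-π, π]`. -/
noncomputable def reducedAngleRatio (t : ℝ) : ℝ := toIocMod two_pi_pos (-π) √t / √t

theorem mul_reducedAngleRatio_sq_of_pos {θ : ℝ} (hθ : 0 < θ) :
    θ * reducedAngleRatio (θ ^ 2) = toIocMod two_pi_pos (-π) θ := by
  rw [reducedAngleRatio, sqrt_sq hθ.le, mul_div_cancel₀ _ hθ.ne']

theorem neg_mul_reducedAngleRatio_sq (θ : ℝ) :
    -θ * reducedAngleRatio ((-θ) ^ 2) = -(θ * reducedAngleRatio (θ ^ 2)) := by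
  rw [neg_sq, neg_mul]

theorem abs_mul_reducedAngleRatio_sq_le (θ : ℝ) : |θ * reducedAngleRatio (θ ^ 2)| ≤ π := by
  wlog hθ : 0 < θ generalizing θ
  · rcases (not_lt.1 hθ).eq_or_lt with rfl | hneg
    · simpa using pi_pos.le
    · simpa [neg_mul_reducedAngleRatio_sq] using this (-θ) (neg_pos.2 hneg)
  have hmem := toIocMod_mem_Ioc two_pi_pos (-π) θ
  rw [mul_reducedAngleRatio_sq_of_pos hθ, abs_le]
  constructor <;> linarith [hmem.1, hmem.2]

theorem exists_mul_reducedAngleRatio_sq_eq (θ : ℝ) :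
    ∃ k : ℤ, θ * reducedAngleRatio (θ ^ 2) = θ - k * (2 * π) := by
  wlog hθ : 0 < θ generalizing θ
  · rcases (not_lt.1 hθ).eq_or_lt with rfl | hneg
    · exact ⟨0, by simp⟩
    · obtain ⟨k, hk⟩ := this (-θ) (neg_pos.2 hneg)
      exact ⟨-k, by rw [neg_mul_reducedAngleRatio_sq] at hk; push_cast; linarith⟩
  refine ⟨toIocDiv two_pi_pos (-π) θ, ?_⟩
  rw [mul_reducedAngleRatio_sq_of_pos hθ, ← zsmul_eq_mul, ← self_sub_toIocMod, sub_sub_cancel]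

theorem exp_I_mul_mul_reducedAngleRatio_sq (θ : ℝ) :
    NormedSpace.exp (I * ↑(θ * reducedAngleRatio (θ ^ 2))) = NormedSpace.exp (I * θ) := by
  obtain ⟨k, hk⟩ := exists_mul_reducedAngleRatio_sq_eq θ
  rw [← Complex.exp_eq_exp_ℂ, Complex.exp_eq_exp_iff_exists_int, hk]
  exact ⟨-k, by push_cast; ring⟩

theorem Polynomial.exists_aeval_I_mul_eq {ι : Type*} [Fintype ι] (θ : ι → ℝ) (g : ℝ → ℝ) :
    ∃ p : ℝ[X], ∀ i, aeval (I * θ i) p = I * ↑(θ i * g (θ i ^ 2)) := by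
  set r := Lagrange.interpolate (Finset.univ.image (θ · ^ 2)) id g
  refine ⟨X * r.comp (-X ^ 2), fun i => ?_⟩
  have hr : r.eval (θ i ^ 2) = g (θ i ^ 2) :=
    Lagrange.eval_interpolate_at_node (v := id) g (Set.injOn_id _)
      (Finset.mem_image_of_mem _ (Finset.mem_univ i))
  have hsq : -(I * θ i) ^ 2 = algebraMap ℝ ℂ (θ i ^ 2) := by
    rw [mul_pow, I_sq, Complex.coe_algebraMap]; push_cast; ring
  rw [map_mul, aeval_X, aeval_comp, map_neg, map_pow, aeval_X, hsq,
    aeval_algebraMap_apply_eq_algebraMap_eval, hr, Complex.coe_algebraMap]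
  push_cast
  ring

theorem Matrix.aeval_diagonal {n R A : Type*} [Fintype n] [DecidableEq n] [CommSemiring R]
    [Semiring A] [Algebra R A] (d : n → A) (p : R[X]) :
    aeval (diagonal d) p = diagonal fun i => aeval (d i) p := by
  rw [← diagonalAlgHom_apply (R := R), aeval_algHom_apply, aeval_pi_apply, diagonalAlgHom_apply]

theorem Polynomial.aeval_unitary_conj {S R : Type*} [CommSemiring S] [Semiring R] [StarMul R]
    [Algebra S R] (u : unitary R) (x : R) (p : S[X]) :
    aeval (u * x * (star u : R)) p = u * aeval x p * (star u : R) :=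
  aeval_algHom_apply (Unitary.conjStarAlgAut S R u) x p

theorem CStarRing.norm_unitary_conj {E : Type*} [NormedRing E] [StarRing E] [CStarRing E]
    (u : unitary E) (x : E) : ‖u * x * (star u : E)‖ = ‖x‖ := by
  rw [← Unitary.coe_star, CStarRing.norm_mul_coe_unitary, CStarRing.norm_coe_unitary_mul]

theorem Matrix.exp_unitary_conj {m 𝔸 : Type*} [Fintype m] [DecidableEq m] [NormedRing 𝔸]
    [StarRing 𝔸] [NormedAlgebra ℚ 𝔸] [CompleteSpace 𝔸] (U : unitary (Matrix m m 𝔸))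
    (A : Matrix m m 𝔸) :
    NormedSpace.exp (U * A * (star U : Matrix m m 𝔸)) =
      U * NormedSpace.exp A * (star U : Matrix m m 𝔸) :=
  exp_units_conj (Unitary.toUnits U) A

theorem Matrix.exists_unitary_diagonal_of_conjTranspose_eq_neg {n : Type*} [Fintype n]
    [DecidableEq n] {M : Matrix n n ℂ} (hM : Mᴴ = -M) :
    ∃ (U : unitary (Matrix n n ℂ)) (θ : n → ℝ),
      M = U * diagonal (fun i => I * θ i) * (star U : Matrix n n ℂ) := by
  have hH : (-I • M).IsHermitian := by
    rw [IsHermitian, conjTranspose_smul, hM]; simp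
  have hspec := hH.spectral_theorem
  set U := hH.eigenvectorUnitary
  set θ := hH.eigenvalues
  refine ⟨U, θ, ?_⟩
  calc M = I • (-I • M) := by rw [smul_smul]; simp
    _ = _ := by
      rw [hspec, ← map_smul, Unitary.conjStarAlgAut_apply, ← diagonal_smul]
      rfl

theorem Matrix.conjTranspose_unitary_conj_diagonal_I_mul {n : Type*} [Fintype n]
    [DecidableEq n] (U : unitary (Matrix n n ℂ)) (φ : n → ℝ) :
    ((U : Matrix n n ℂ) * diagonal (fun i => I * φ i) * (star U : Matrix n n ℂ))ᴴ =
      -((U : Matrix n n ℂ) * diagonal (fun i => I * φ i) * (star U : Matrix n n ℂ)) := by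
  have hD : (diagonal fun i => I * (φ i : ℂ))ᴴ = -diagonal fun i => I * (φ i : ℂ) := by
    rw [diagonal_conjTranspose, diagonal_neg]
    congr 1 with i
    simp
  rw [conjTranspose_mul, conjTranspose_mul, ← star_eq_conjTranspose, star_star, hD,
    ← star_eq_conjTranspose]
  noncomm_ring

theorem Matrix.conjTranspose_map_ofReal {m n : Type*} (B : Matrix m n ℝ) :
    (B.map ((↑) : ℝ → ℂ))ᴴ = Bᵀ.map (↑) := by
  ext; simp

theorem Matrix.aeval_map_ofReal {n : Type*} [Fintype n] [DecidableEq n] (A : Matrix n n ℝ)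
    (p : ℝ[X]) :
    aeval (A.map ((↑) : ℝ → ℂ)) p = (aeval A p).map (↑) :=
  aeval_algHom_apply Complex.ofRealAm.mapMatrix A p

theorem Matrix.exp_map_ofReal {n : Type*} [Fintype n] [DecidableEq n] (A : Matrix n n ℝ) :
    NormedSpace.exp (A.map ((↑) : ℝ → ℂ)) = (NormedSpace.exp A).map (↑) := by
  let : NormedAlgebra ℚ (Matrix n n ℝ) := .restrictScalars ℚ ℝ _
  exact (NormedSpace.map_exp Complex.ofRealHom.mapMatrix
    (continuous_id.matrix_map Complex.continuous_ofReal) A).symm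

theorem EuclideanSpace.norm_toLp_ofReal {n : Type*} [Fintype n] (x : n → ℝ) :
    ‖(WithLp.toLp 2 fun i => (x i : ℂ) : EuclideanSpace ℂ n)‖ =
      ‖(WithLp.toLp 2 x : EuclideanSpace ℝ n)‖ := by
  simp [EuclideanSpace.norm_eq]

theorem Matrix.l2_opNorm_le_l2_opNorm_map_ofReal {m n : Type*} [Fintype m] [Fintype n]
    [DecidableEq n] (B : Matrix m n ℝ) : ‖B‖ ≤ ‖B.map ((↑) : ℝ → ℂ)‖ := by
  refine ContinuousLinearMap.opNorm_le_bound _ (norm_nonneg _) fun x => ?_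
  have hmulVec : B.map ((↑) : ℝ → ℂ) *ᵥ (fun j => (x j : ℂ)) =
      fun i => ((B *ᵥ x.ofLp) i : ℂ) := by
    ext i; simp [mulVec, dotProduct]
  have h := l2_opNorm_mulVec (B.map ((↑) : ℝ → ℂ)) (WithLp.toLp 2 fun j => (x j : ℂ))
  rw [WithLp.ofLp_toLp, hmulVec, EuclideanSpace.norm_toLp_ofReal] at h
  calc _ = ‖(WithLp.toLp 2 fun i => ((B *ᵥ x.ofLp) i : ℂ) : EuclideanSpace ℂ m)‖ :=
        (EuclideanSpace.norm_toLp_ofReal _).symm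
    _ ≤ _ := h

/-- For every real skew-symmetric matrix `A` (`Aᵀ = -A`), there exists a real skew-symmetric
matrix `B` with the same matrix exponential and spectral norm at most `π`. -/
theorem exists_skew_exp_eq_norm_le_pi {n : ℕ} (A : Matrix (Fin n) (Fin n) ℝ)
    (hA : Aᵀ = -A) :
    ∃ B : Matrix (Fin n) (Fin n) ℝ,
      Bᵀ = -B ∧ NormedSpace.exp B = NormedSpace.exp A ∧ ‖B‖ ≤ Real.pi := by
  obtain ⟨U, θ, hAU⟩ := exists_unitary_diagonal_of_conjTranspose_eq_neg
    (M := A.map (↑)) (by rw [conjTranspose_map_ofReal, hA, Matrix.map_neg _ ofReal_neg])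
  obtain ⟨p, hp⟩ := exists_aeval_I_mul_eq θ reducedAngleRatio
  set φ := fun i => θ i * reducedAngleRatio (θ i ^ 2)
  have hB : (aeval A p).map (↑) =
      (U : Matrix (Fin n) (Fin n) ℂ) * diagonal (fun i => I * φ i) * (star U : Matrix _ _ ℂ) := by
    rw [← aeval_map_ofReal, hAU, aeval_unitary_conj, aeval_diagonal]
    simp only [hp, φ]
  refine ⟨aeval A p, map_injective ofReal_injective ?_, map_injective ofReal_injective ?_, ?_⟩
  · dsimp only
    rw [← conjTranspose_map_ofReal, Matrix.map_neg _ ofReal_neg, hB,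
      conjTranspose_unitary_conj_diagonal_I_mul]
  · dsimp only
    rw [← exp_map_ofReal, hB, ← exp_map_ofReal, hAU, exp_unitary_conj, exp_unitary_conj,
      exp_diagonal, exp_diagonal, Pi.exp_def, Pi.exp_def]
    simp only [φ, exp_I_mul_mul_reducedAngleRatio_sq]
  · calc ‖aeval A p‖ ≤ ‖(aeval A p).map ((↑) : ℝ → ℂ)‖ := l2_opNorm_le_l2_opNorm_map_ofReal _
      _ = ‖(diagonal fun i => I * φ i : Matrix _ _ ℂ)‖ := by rw [hB, CStarRing.norm_unitary_conj]
      _ ≤ π := by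
        rw [l2_opNorm_diagonal]
        refine pi_norm_le_iff_of_nonneg pi_pos.le |>.2 fun i => ?_
        simpa [φ] using abs_mul_reducedAngleRatio_sq_le (θ i)
end

section
/- For every skew-Hermitian matrix A ∈ ℂ^{n×n} (A^H = -A), there exists a skew-Hermitian matrix B ∈ ℂ^{n×n} such that exp(B) = exp(A) and ‖B‖₂ ≤ π. -/
/-!
Take `B = f(A)` in the continuous functional calculus, with `f z = log (exp z)`. Then
`exp ∘ f = exp`, and on the imaginary axis, which contains the spectrum of a skew-adjoint
element, `f` takes imaginary values of modulus at most `π` (its imaginary part is the principal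
argument). The function `f` jumps along the lines `Im z ∈ π + 2πℤ`, but the spectrum of a matrix
is finite, so `f` is continuous on it.
-/

open Matrix

open scoped Matrix.Norms.L2Operator

namespace Complex

lemma re_log_exp (z : ℂ) : (log (exp z)).re = z.re := by
  rw [log_re, norm_exp, Real.log_exp]

lemma norm_log_exp_le_pi {z : ℂ} (hz : z.re = 0) : ‖log (exp z)‖ ≤ Real.pi := by
  have hre : (log (exp z)).re = 0 := (re_log_exp z).trans hz
  calc ‖log (exp z)‖ ≤ |(log (exp z)).re| + |(log (exp z)).im| := norm_le_abs_re_add_abs_im _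
    _ = |arg (exp z)| := by rw [hre, abs_zero, zero_add, log_im]
    _ ≤ Real.pi := abs_arg_le_pi _

lemma star_log_exp {z : ℂ} (hz : z.re = 0) : star (log (exp z)) = -log (exp z) := by
  have hre : (log (exp z)).re = 0 := (re_log_exp z).trans hz
  apply ext <;> simp [hre]

end Complex

section CStarAlgebra

variable {A : Type*} [CStarAlgebra A] {a : A}

lemma re_eq_zero_of_mem_spectrum_of_star_eq_neg (ha : star a = -a) {z : ℂ}
    (hz : z ∈ spectrum ℂ a) : z.re = 0 := by
  have : IsStarNormal a := skewAdjoint.isStarNormal_of_mem ha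
  have hcfc : cfc (star · : ℂ → ℂ) a = cfc (- · : ℂ → ℂ) a := by
    rw [cfc_star_id (a := a), cfc_neg_id (a := a), ha]
  have h : z.re = -z.re := by
    simpa using congrArg Complex.re ((eqOn_of_cfc_eq_cfc hcfc) hz)
  linarith

theorem exists_star_eq_neg_exp_eq_norm_le_pi (ha : star a = -a) (hfin : (spectrum ℂ a).Finite) :
    ∃ b : A, star b = -b ∧ NormedSpace.exp b = NormedSpace.exp a ∧ ‖b‖ ≤ Real.pi := by
  have : IsStarNormal a := skewAdjoint.isStarNormal_of_mem ha
  have hre z (hz : z ∈ spectrum ℂ a) : z.re = 0 :=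
    re_eq_zero_of_mem_spectrum_of_star_eq_neg ha hz
  refine ⟨cfc (fun z ↦ Complex.log (Complex.exp z)) a, ?_, ?_, ?_⟩
  · rw [← cfc_star, ← cfc_neg]
    exact cfc_congr fun z hz ↦ Complex.star_log_exp (hre z hz)
  · rw [← CFC.complex_exp_eq_normedSpace_exp, ← CFC.complex_exp_eq_normedSpace_exp,
      ← cfc_comp' Complex.exp _ a Complex.continuous_exp.continuousOn (hfin.continuousOn _)]
    exact cfc_congr fun z _ ↦ Complex.exp_log (Complex.exp_ne_zero z)
  · exact norm_cfc_le Real.pi_pos.le fun z hz ↦ Complex.norm_log_exp_le_pi (hre z hz)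

end CStarAlgebra

/-- For every complex skew-Hermitian matrix `A` (`Aᴴ = -A`), there exists a skew-Hermitian
matrix `B` with the same matrix exponential and spectral norm at most `π`. -/
theorem exists_skewHermitian_exp_eq_norm_le_pi {n : ℕ} (A : Matrix (Fin n) (Fin n) ℂ)
    (hA : Aᴴ = -A) :
    ∃ B : Matrix (Fin n) (Fin n) ℂ,
      Bᴴ = -B ∧ NormedSpace.exp B = NormedSpace.exp A ∧ ‖B‖ ≤ Real.pi :=
  exists_star_eq_neg_exp_eq_norm_le_pi hA A.finite_spectrum
end

section
/- For every real skew-symmetric matrix A ∈ ℝ^{n×n} (Aᵀ = -A), there exist a real orthogonal matrix Q ∈ ℝ^{n×n} and real numbers λ_0, …, λ_{⌊n/2⌋-1} such that A = Q Σ Qᵀ, where Σ ∈ ℝ^{n×n} is the block-diagonal matrix whose i-th 2×2 diagonal block (for 0 ≤ i < ⌊n/2⌋) is [[0, λ_i], [-λ_i, 0]], with all remaining entries zero (in particular, when n is odd the last diagonal entry of Σ is 0). -/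
/-!
A nonzero real skew-symmetric matrix `A` acts on some plane as `[[0, l], [-l, 0]]`: if `u` is a
unit eigenvector of the positive semidefinite matrix `Aᵀ A` for an eigenvalue `l² > 0`, then `u`
and `v = -l⁻¹ A u` are orthonormal, `A u = -l v` and `A v = l u`. Completing `u, v` to an orthogonal
matrix `G` gives `A = G (diag([[0, l], [-l, 0]], C)) Gᵀ`, where the off-diagonal blocks vanish by
skew-symmetry and `C` is again skew-symmetric, so induction on the size finishes the proof.
-/

open Matrix

/-- The real block-diagonal matrix whose `i`-th `2×2` diagonal block (for `0 ≤ i < ⌊n/2⌋`) is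
`[[0, λ_i], [-λ_i, 0]]`, with all remaining entries zero (in particular, when `n` is odd the last
diagonal entry is `0`). -/
def skewBlockDiagonal {n : ℕ} (lam : Fin (n / 2) → ℝ) : Matrix (Fin n) (Fin n) ℝ :=
  Matrix.of fun i j =>
    if h : (i : ℕ) % 2 = 0 ∧ (i : ℕ) + 1 = (j : ℕ) then
      lam ⟨(i : ℕ) / 2, by have := j.isLt; omega⟩
    else if h' : (j : ℕ) % 2 = 0 ∧ (j : ℕ) + 1 = (i : ℕ) then
      -lam ⟨(j : ℕ) / 2, by have := i.isLt; omega⟩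
    else 0

lemma Matrix.eq_zero_of_transpose_eq_neg {ι R : Type*} [Subsingleton ι] [AddGroup R]
    [IsAddTorsionFree R] {A : Matrix ι ι R} (hA : Aᵀ = -A) : A = 0 := by
  ext i j
  obtain rfl := Subsingleton.elim i j
  exact self_eq_neg.mp (congrFun (congrFun hA i) i)

lemma Matrix.dotProduct_mulVec_self_of_transpose_eq_neg {ι R : Type*} [Fintype ι] [CommRing R]
    [IsAddTorsionFree R] {A : Matrix ι ι R} (hA : Aᵀ = -A) (x : ι → R) : x ⬝ᵥ (A *ᵥ x) = 0 := by
  have h : x ⬝ᵥ (Aᵀ *ᵥ x) = x ⬝ᵥ (A *ᵥ x) := by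
    rw [mulVec_transpose, dotProduct_comm, dotProduct_mulVec]
  rw [hA, neg_mulVec, dotProduct_neg] at h
  exact neg_eq_self.mp h

lemma Matrix.gram_toLp_transpose_eq_transpose_mul {ι κ : Type*} [Fintype ι] (U : Matrix ι κ ℝ) :
    gram ℝ (fun k => WithLp.toLp 2 (Uᵀ k)) = Uᵀ * U := by
  ext k k'
  simp [gram_apply, EuclideanSpace.inner_eq_star_dotProduct, mul_apply, dotProduct, mul_comm]

lemma Matrix.exists_transpose_mul_self_mulVec_eq_smul {m ι : Type*} [Fintype m] [Fintype ι]
    [DecidableEq ι] {A : Matrix m ι ℝ} (hA : A ≠ 0) :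
    ∃ (μ : ℝ) (u : ι → ℝ), 0 < μ ∧ u ⬝ᵥ u = 1 ∧ (Aᵀ * A) *ᵥ u = μ • u := by
  have hS := isHermitian_conjTranspose_mul_self A
  obtain ⟨i, hi⟩ : ∃ i, hS.eigenvalues i ≠ 0 := by
    by_contra! h
    exact hA (conjTranspose_mul_self_eq_zero.mp (hS.eigenvalues_eq_zero_iff.mp (funext h)))
  refine ⟨hS.eigenvalues i, hS.eigenvectorBasis i,
    (eigenvalues_conjTranspose_mul_self_nonneg A i).lt_of_ne' hi, ?_, ?_⟩
  · have := (orthonormal_iff_ite.mp hS.eigenvectorBasis.orthonormal) i i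
    rw [EuclideanSpace.inner_eq_star_dotProduct] at this
    simpa using this
  · simpa using hS.mulVec_eigenvectorBasis i

lemma Matrix.exists_invariant_plane_of_transpose_eq_neg {ι : Type*} [Fintype ι] [DecidableEq ι]
    {A : Matrix ι ι ℝ} (hA : Aᵀ = -A) (hA0 : A ≠ 0) :
    ∃ (l : ℝ) (U : Matrix ι (Fin 2) ℝ), Uᵀ * U = 1 ∧ A * U = U * !![0, l; -l, 0] := by
  obtain ⟨μ, u, hμ, hu, hAAu⟩ := exists_transpose_mul_self_mulVec_eq_smul hA0
  set l := √μ
  have hl : l ≠ 0 := (Real.sqrt_pos.mpr hμ).ne'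
  have hl2 : l * l = μ := Real.mul_self_sqrt hμ.le
  set v := -l⁻¹ • (A *ᵥ u) with hv
  have huv : u ⬝ᵥ v = 0 := by
    simp [hv, dotProduct_mulVec_self_of_transpose_eq_neg hA]
  have hvu : v ⬝ᵥ u = 0 := by rwa [dotProduct_comm]
  have hvv : v ⬝ᵥ v = 1 := by
    have : (A *ᵥ u) ⬝ᵥ (A *ᵥ u) = μ := by
      rw [dotProduct_comm, dotProduct_mulVec, ← mulVec_transpose, mulVec_mulVec, hAAu,
        smul_dotProduct, hu, smul_eq_mul, mul_one]
    simp only [hv, smul_dotProduct, dotProduct_smul, this, smul_eq_mul, ← hl2]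
    field_simp
  have hAu : A *ᵥ u = -l • v := by
    simp [hv, smul_smul, hl]
  have hAv : A *ᵥ v = l • u := by
    have hAA : A * A = -(Aᵀ * A) := by rw [hA, neg_mul, neg_neg]
    rw [hv, mulVec_smul, mulVec_mulVec, hAA, neg_mulVec, hAAu, ← hl2, smul_neg, neg_smul, neg_neg,
      smul_smul, ← mul_assoc, inv_mul_cancel₀ hl, one_mul]
  refine ⟨l, (of ![u, v])ᵀ, ?_, ?_⟩
  · ext k k'
    fin_cases k <;> fin_cases k' <;> simpa [mul_apply, dotProduct]
  · ext i k
    fin_cases k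
    · simpa [mul_apply, mulVec, dotProduct, mul_comm] using congrFun hAu i
    · simpa [mul_apply, mulVec, dotProduct, mul_comm] using congrFun hAv i

lemma Matrix.exists_transpose_mul_fromCols_eq_one {ι κ μ : Type*} [Fintype ι] [Fintype κ]
    [Fintype μ] [DecidableEq κ] [DecidableEq μ] (U : Matrix ι κ ℝ) (hU : Uᵀ * U = 1)
    (hcard : Fintype.card ι = Fintype.card κ + Fintype.card μ) :
    ∃ W : Matrix ι μ ℝ, (fromCols U W)ᵀ * fromCols U W = 1 := by
  let v : κ ⊕ μ → EuclideanSpace ℝ ι := Sum.elim (fun k => WithLp.toLp 2 (Uᵀ k)) 0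
  have hv : Orthonormal ℝ ((Set.range Sum.inl).domRestrict v) := by
    have : Orthonormal ℝ (fun k => WithLp.toLp 2 (Uᵀ k)) := by
      rw [← gram_eq_one_iff_orthonormal, gram_toLp_transpose_eq_transpose_mul, hU]
    convert this.comp _ (Equiv.ofInjective _ Sum.inl_injective).symm.injective
    ext ⟨_, k, rfl⟩ : 1
    simp [v, Set.domRestrict]
  obtain ⟨b, hb⟩ := hv.exists_orthonormalBasis_extension_of_card_eq (by simp [hcard])
  refine ⟨of fun i j => b (Sum.inr j) i, ?_⟩
  have hQ : fromCols U (of fun i j => b (Sum.inr j) i) = of fun i p => b p i := by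
    ext i (k | j)
    · simp [hb (Sum.inl k) ⟨k, rfl⟩, v]
    · rfl
  rw [hQ, ← gram_toLp_transpose_eq_transpose_mul]
  exact gram_eq_one_iff_orthonormal.mpr b.orthonormal

lemma Matrix.transpose_mul_mul_fromCols_of_mul_eq_mul {ι κ μ R : Type*} [Fintype ι] [Fintype κ]
    [Fintype μ] [DecidableEq κ] [DecidableEq μ] [CommRing R] {A : Matrix ι ι R}
    {U : Matrix ι κ R} {W : Matrix ι μ R} {S : Matrix κ κ R}
    (hQ : (fromCols U W)ᵀ * fromCols U W = 1) (hA : Aᵀ = -A) (hAU : A * U = U * S) :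
    (fromCols U W)ᵀ * A * fromCols U W = fromBlocks S 0 0 (Wᵀ * A * W) := by
  rw [transpose_fromCols, fromRows_mul_fromCols, ← fromBlocks_one] at hQ
  obtain ⟨hUU, -, hWU, -⟩ := fromBlocks_inj.mp hQ
  have hWAU : Wᵀ * A * U = 0 := by
    rw [Matrix.mul_assoc, hAU, ← Matrix.mul_assoc, hWU, Matrix.zero_mul]
  have hUAW : Uᵀ * A * W = 0 := by
    have h : (Uᵀ * A * W)ᵀ = -(Wᵀ * A * U) := by simp [transpose_mul, hA, Matrix.mul_assoc]
    rwa [hWAU, neg_zero, transpose_eq_zero] at h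
  rw [transpose_fromCols, fromRows_mul, fromRows_mul_fromCols, hWAU, hUAW, Matrix.mul_assoc, hAU,
    ← Matrix.mul_assoc, hUU, Matrix.one_mul]

lemma Matrix.exists_eq_conj_fromBlocks_of_transpose_eq_neg {ι μ : Type*} [Fintype ι]
    [DecidableEq ι] [Fintype μ] [DecidableEq μ] {A : Matrix ι ι ℝ} (hA : Aᵀ = -A) (hA0 : A ≠ 0)
    (hcard : Fintype.card ι = 2 + Fintype.card μ) :
    ∃ (l : ℝ) (G : Matrix ι (Fin 2 ⊕ μ) ℝ) (C : Matrix μ μ ℝ),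
      G * Gᵀ = 1 ∧ Cᵀ = -C ∧ A = G * fromBlocks !![0, l; -l, 0] 0 0 C * Gᵀ := by
  obtain ⟨l, U, hU, hAU⟩ := exists_invariant_plane_of_transpose_eq_neg hA hA0
  obtain ⟨W, hQ⟩ := exists_transpose_mul_fromCols_eq_one (μ := μ) U hU (by simpa using hcard)
  have hQ' : fromCols U W * (fromCols U W)ᵀ = 1 :=
    (mul_eq_one_comm_of_equiv (Fintype.equivOfCardEq (by simpa using hcard.symm))).mp hQ
  refine ⟨l, fromCols U W, Wᵀ * A * W, hQ', by simp [transpose_mul, hA, Matrix.mul_assoc], ?_⟩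
  rw [← transpose_mul_mul_fromCols_of_mul_eq_mul hQ hA hAU]
  calc A = (fromCols U W * (fromCols U W)ᵀ) * A * (fromCols U W * (fromCols U W)ᵀ) := by
        rw [hQ', Matrix.one_mul, Matrix.mul_one]
    _ = _ := by simp only [Matrix.mul_assoc]

@[simp]
lemma skewBlockDiagonal_zero {n : ℕ} : skewBlockDiagonal (0 : Fin (n / 2) → ℝ) = 0 := by
  ext i j
  simp [skewBlockDiagonal]

def finTwoSumEquiv (m : ℕ) : Fin 2 ⊕ Fin m ≃ Fin (m + 2) :=
  finSumFinEquiv.trans (finCongr (Nat.add_comm 2 m))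

lemma exists_skewBlockDiagonal_eq_reindex_fromBlocks {m : ℕ} (l : ℝ) (mu : Fin (m / 2) → ℝ) :
    ∃ lam : Fin ((m + 2) / 2) → ℝ, skewBlockDiagonal lam =
      reindex (finTwoSumEquiv m) (finTwoSumEquiv m)
        (fromBlocks !![0, l; -l, 0] 0 0 (skewBlockDiagonal mu)) := by
  refine ⟨fun k => if hk : (k : ℕ) = 0 then l else mu ⟨k - 1, by omega⟩, ?_⟩
  rw [← Equiv.symm_apply_eq, reindex_symm, reindex_apply, Equiv.symm_symm]
  ext (i | i) (j | j)
  · fin_cases i <;> fin_cases j <;> simp [skewBlockDiagonal, finTwoSumEquiv]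
  · fin_cases i <;> simp [skewBlockDiagonal, finTwoSumEquiv]
  · fin_cases j <;> simp [skewBlockDiagonal, finTwoSumEquiv]
  · simp [skewBlockDiagonal, finTwoSumEquiv]

lemma Matrix.fromBlocks_mul_fromBlocks_mul_transpose {κ μ R : Type*} [Fintype κ] [Fintype μ]
    [DecidableEq κ] [CommRing R] (S : Matrix κ κ R) (P M : Matrix μ μ R) :
    fromBlocks 1 0 0 P * fromBlocks S 0 0 M * (fromBlocks 1 0 0 P)ᵀ =
      fromBlocks S 0 0 (P * M * Pᵀ) := by
  simp [fromBlocks_transpose, fromBlocks_multiply]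

theorem exists_mul_transpose_eq_one_and_eq_conj_skewBlockDiagonal :
    ∀ {n : ℕ} (A : Matrix (Fin n) (Fin n) ℝ), Aᵀ = -A →
      ∃ (Q : Matrix (Fin n) (Fin n) ℝ) (lam : Fin (n / 2) → ℝ),
        Q * Qᵀ = 1 ∧ A = Q * skewBlockDiagonal lam * Qᵀ
  | 0, A, hA | 1, A, hA => ⟨1, 0, by simp, by simp [eq_zero_of_transpose_eq_neg hA]⟩
  | m + 2, A, hA => by
    by_cases hA0 : A = 0
    · exact ⟨1, 0, by simp, by simp [hA0]⟩
    obtain ⟨l, G, C, hG, hC, rfl⟩ :=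
      exists_eq_conj_fromBlocks_of_transpose_eq_neg (μ := Fin m) hA hA0 (by simp [Nat.add_comm])
    obtain ⟨P, mu, hP, rfl⟩ := exists_mul_transpose_eq_one_and_eq_conj_skewBlockDiagonal C hC
    obtain ⟨lam, hlam⟩ := exists_skewBlockDiagonal_eq_reindex_fromBlocks l mu
    let F : Matrix (Fin 2 ⊕ Fin m) (Fin 2 ⊕ Fin m) ℝ := fromBlocks 1 0 0 P
    have hF : F * Fᵀ = 1 := by simp [F, fromBlocks_transpose, fromBlocks_multiply, hP]
    refine ⟨(G * F).submatrix id (finTwoSumEquiv m).symm, lam, ?_, ?_⟩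
    · rw [transpose_submatrix, submatrix_mul_transpose_submatrix, transpose_mul, Matrix.mul_assoc,
        ← Matrix.mul_assoc F, hF, Matrix.one_mul, hG]
    · rw [hlam, reindex_apply, transpose_submatrix, submatrix_mul_equiv, submatrix_mul_equiv,
        submatrix_id_id, transpose_mul, ← fromBlocks_mul_fromBlocks_mul_transpose]
      simp only [F, Matrix.mul_assoc]

/-- Every real skew-symmetric matrix `A` (`Aᵀ = -A`) can be written as `A = Q Σ Qᵀ` where `Q` is
a real orthogonal matrix and `Σ` is the block-diagonal matrix with `2×2` blocks
`[[0, λ_i], [-λ_i, 0]]`. -/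
theorem skewSymmetric_block_decomposition {n : ℕ} (A : Matrix (Fin n) (Fin n) ℝ)
    (hA : Aᵀ = -A) :
    ∃ (Q : Matrix (Fin n) (Fin n) ℝ) (lam : Fin (n / 2) → ℝ),
      Qᵀ * Q = 1 ∧ Q * Qᵀ = 1 ∧ A = Q * skewBlockDiagonal lam * Qᵀ := by
  obtain ⟨Q, lam, hQ, hA⟩ := exists_mul_transpose_eq_one_and_eq_conj_skewBlockDiagonal A hA
  exact ⟨Q, lam, mul_eq_one_comm.mp hQ, hQ, hA⟩
end
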